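/- arXiv:math/0506131 — 5 statements merged into one kernel-verified Lean document; each statement's English description precedes it below -/
import Mathlib

section
/- Let g : ℝ → [0,∞) be Lipschitz with ‖g'‖_∞ ≤ L, let μ > 0, and define χ₀(ξ,η) = 0 if 0 < η < g(ξ), χ₀(ξ,η) = (η − g(ξ))/(μ g(ξ)) if g(ξ) > 0 and g(ξ) ≤ η ≤ (1+μ)g(ξ), and χ₀(ξ,η) = 1 if η > (1+μ)g(ξ). Then χ₀ is locally Lipschitz on the upper half-plane ℂ⁺ and satisfies the gradient bound |∇χ₀(ξ,η)| ≤ C/η almost everywhere for a constant C depending only on L and μ. -/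
open MeasureTheory

set_option maxHeartbeats 1000000

/-- The clamp map `x ↦ min 1 (max 0 x)` is 1-Lipschitz (in absolute-value form). -/
lemma clamp_abs_le (x y : ℝ) : |min 1 (max 0 x) - min 1 (max 0 y)| ≤ |x - y| := by
  have hmin : ∀ a b : ℝ, |min 1 a - min 1 b| ≤ |a - b| := by
    intro a b
    have hab := le_abs_self (a - b)
    have hba := neg_abs_le (a - b)
    rw [abs_sub_le_iff]
    rcases min_cases (1:ℝ) a with ⟨e1, l1⟩ | ⟨e1, l1⟩ <;>
      rcases min_cases (1:ℝ) b with ⟨e2, l2⟩ | ⟨e2, l2⟩ <;>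
      rw [e1, e2] <;> constructor <;> linarith
  have hmax : ∀ a b : ℝ, |max 0 a - max 0 b| ≤ |a - b| := by
    intro a b
    have hab := le_abs_self (a - b)
    have hba := neg_abs_le (a - b)
    rw [abs_sub_le_iff]
    rcases max_cases (0:ℝ) a with ⟨e1, l1⟩ | ⟨e1, l1⟩ <;>
      rcases max_cases (0:ℝ) b with ⟨e2, l2⟩ | ⟨e2, l2⟩ <;>
      rw [e1, e2] <;> constructor <;> linarith
  exact (hmin _ _).trans (hmax _ _)

/-- The cutoff function `χ₀` between the graphs of `g` and `(1+μ)g` is locally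
Lipschitz on the upper half-plane and satisfies `|∇χ₀| ≤ C/η` a.e., with `C`
depending only on the Lipschitz constant of `g` and on `μ`. -/
theorem stmt_4 (L : NNReal) (μ : ℝ) (hμ : 0 < μ) :
    ∃ C > 0, ∀ (g : ℝ → ℝ) (χ : ℝ × ℝ → ℝ),
      LipschitzWith L g → (∀ ξ, 0 ≤ g ξ) →
      (∀ ξ η : ℝ, 0 < η → η < g ξ → χ (ξ, η) = 0) →
      (∀ ξ η : ℝ, 0 < g ξ → g ξ ≤ η → η ≤ (1 + μ) * g ξ →
        χ (ξ, η) = (η - g ξ) / (μ * g ξ)) →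
      (∀ ξ η : ℝ, 0 < η → (1 + μ) * g ξ < η → χ (ξ, η) = 1) →
      (∀ p : ℝ × ℝ, 0 < p.2 → ∃ K : NNReal, ∃ s ∈ nhds p, LipschitzOnWith K χ s) ∧
      (∀ᵐ p : ℝ × ℝ ∂volume, 0 < p.2 →
        DifferentiableAt ℝ χ p ∧ ‖fderiv ℝ χ p‖ ≤ C / p.2) := by
  have hL0 : (0:ℝ) ≤ L := L.coe_nonneg
  have h1μ : (0:ℝ) < 1 + μ := by linarith
  set C : ℝ := (2*(1+μ) + 8*(L:ℝ)*(1+μ)^2)/μ with hCdef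
  have hCpos : 0 < C := by positivity
  refine ⟨C, hCpos, ?_⟩
  intro g χ hg hg0 hχ0 hχm hχ1
  have hgl : ∀ x y : ℝ, |g x - g y| ≤ (L:ℝ) * |x - y| := by
    intro x y
    have := hg.dist_le_mul x y
    rwa [Real.dist_eq, Real.dist_eq] at this
  have hmem : ∀ (p q : ℝ × ℝ) (r : ℝ), q ∈ Metric.ball p r →
      |q.1 - p.1| < r ∧ |q.2 - p.2| < r := by
    intro p q r hq
    rw [Metric.mem_ball, Prod.dist_eq, max_lt_iff, Real.dist_eq, Real.dist_eq] at hq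
    exact hq
  have key : ∀ p : ℝ × ℝ, 0 < p.2 → ∃ r > 0, ∃ K : NNReal,
      (K : ℝ) ≤ C / p.2 ∧ LipschitzOnWith K χ (Metric.ball p r) := by
    intro p hp2
    by_cases hcase : (1 + μ) * g p.1 < p.2
    · -- far above the graph: χ = 1 on a small ball
      set d : ℝ := p.2 - (1 + μ) * g p.1 with hd
      have hdpos : 0 < d := by rw [hd]; linarith
      have hdle : d ≤ p.2 := by
        have := mul_nonneg h1μ.le (hg0 p.1); rw [hd]; linarith
      set r : ℝ := d / (2 * ((1+μ)*(L:ℝ) + 1)) with hrdef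
      have hden : (0:ℝ) < 2 * ((1+μ)*(L:ℝ) + 1) := by positivity
      have hrpos : 0 < r := by positivity
      have hr2 : ((1+μ)*(L:ℝ) + 1) * r = d / 2 := by
        rw [hrdef]; field_simp
      refine ⟨r, hrpos, 0, by simp [le_of_lt (div_pos hCpos hp2)], ?_⟩
      have hone : ∀ q ∈ Metric.ball p r, χ q = 1 := by
        intro q hq
        obtain ⟨h1, h2⟩ := hmem p q r hq
        have hgq : g q.1 ≤ g p.1 + (L:ℝ) * r := by
          have := hgl q.1 p.1
          have habs := le_abs_self (g q.1 - g p.1)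
          nlinarith [abs_nonneg (q.1 - p.1), le_abs_self (q.1 - p.1)]
        have h2' : p.2 - r < q.2 := by
          have := neg_abs_le (q.2 - p.2); linarith
        have hrd : r ≤ d / 2 := by
          nlinarith [mul_nonneg (mul_nonneg h1μ.le hL0) hrpos.le]
        have hq2pos : 0 < q.2 := by linarith
        have hlt : (1 + μ) * g q.1 < q.2 := by
          nlinarith [mul_le_mul_of_nonneg_left hgq h1μ.le]
        exact hχ1 q.1 q.2 hq2pos hlt
      apply LipschitzOnWith.of_dist_le_mul
      intro x hx y hy
      rw [hone x hx, hone y hy, dist_self]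
      positivity
    · -- near or below the graph: χ is the clamped linear interpolation
      push_neg at hcase
      set G : ℝ := g p.1 with hGdef
      have hGpos : 0 < G := by nlinarith [hg0 p.1]
      set a : ℝ := G / 2 with hadef
      have ha : 0 < a := by positivity
      set r : ℝ := min p.2 (G / (2 * ((L:ℝ) + 1))) with hrdef
      have hrpos : 0 < r := lt_min hp2 (by positivity)
      have hrp2 : r ≤ p.2 := min_le_left _ _
      have hrG : (L:ℝ) * r ≤ G / 2 := by
        have h1 : r ≤ G / (2 * ((L:ℝ) + 1)) := min_le_right _ _
        have h2 : (L:ℝ) * r ≤ (L:ℝ) * (G / (2 * ((L:ℝ) + 1))) := by nlinarith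
        have h3 : (L:ℝ) * (G / (2 * ((L:ℝ) + 1))) ≤ G / 2 := by
          rw [show (L:ℝ) * (G / (2 * ((L:ℝ) + 1))) = ((L:ℝ) * G) / (2 * ((L:ℝ) + 1)) from by
            ring]
          rw [div_le_div_iff₀ (by positivity) (by norm_num)]
          nlinarith
        linarith
      have hgq : ∀ q ∈ Metric.ball p r, a ≤ g q.1 := by
        intro q hq
        obtain ⟨h1, _⟩ := hmem p q r hq
        have := hgl q.1 p.1
        have habs := neg_abs_le (g q.1 - g p.1)
        have : (L:ℝ) * |q.1 - p.1| ≤ (L:ℝ) * r := by nlinarith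
        rw [hadef]
        nlinarith [neg_abs_le (g q.1 - g p.1), hgl q.1 p.1]
      have hq2pos : ∀ q ∈ Metric.ball p r, 0 < q.2 := by
        intro q hq
        obtain ⟨_, h2⟩ := hmem p q r hq
        have := neg_abs_le (q.2 - p.2)
        linarith
      have hq2ub : ∀ q ∈ Metric.ball p r, q.2 ≤ 2 * p.2 := by
        intro q hq
        obtain ⟨_, h2⟩ := hmem p q r hq
        have := le_abs_self (q.2 - p.2)
        linarith
      have hform : ∀ q ∈ Metric.ball p r,
          χ q = min 1 (max 0 ((q.2 - g q.1) / (μ * g q.1))) := by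
        intro q hq
        have hb : a ≤ g q.1 := hgq q hq
        have hbpos : 0 < g q.1 := lt_of_lt_of_le ha hb
        have h2 : 0 < q.2 := hq2pos q hq
        rcases lt_or_ge q.2 (g q.1) with hlt | hge
        · have hneg : (q.2 - g q.1) / (μ * g q.1) < 0 :=
            div_neg_of_neg_of_pos (by linarith) (by positivity)
          rw [max_eq_left hneg.le, min_eq_right zero_le_one]
          exact hχ0 q.1 q.2 h2 hlt
        · rcases le_or_gt q.2 ((1 + μ) * g q.1) with hle | hgt
          · have h0 : 0 ≤ (q.2 - g q.1) / (μ * g q.1) :=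
              div_nonneg (by linarith) (by positivity)
            have h1' : (q.2 - g q.1) / (μ * g q.1) ≤ 1 := by
              rw [div_le_one (by positivity)]; nlinarith
            rw [max_eq_right h0, min_eq_right h1']
            exact hχm q.1 q.2 hbpos hge hle
          · have h1' : 1 < (q.2 - g q.1) / (μ * g q.1) := by
              rw [lt_div_iff₀ (by positivity)]; nlinarith
            have h0 : 0 ≤ (q.2 - g q.1) / (μ * g q.1) := by linarith
            rw [max_eq_right h0, min_eq_left h1'.le]
            exact hχ1 q.1 q.2 h2 hgt
      set Kr : ℝ := 1 / (μ * a) + 2 * p.2 * (L:ℝ) / (μ * a ^ 2) with hKrdef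
      have hKrpos : 0 < Kr := by positivity
      refine ⟨r, hrpos, Real.toNNReal Kr, ?_, ?_⟩
      · rw [Real.coe_toNNReal _ hKrpos.le]
        have hsum : C / p.2 = 2*(1+μ)/(μ*p.2) + 8*(L:ℝ)*(1+μ)^2/(μ*p.2) := by
          rw [hCdef]; field_simp
        have hb1 : 1 / (μ * a) ≤ 2*(1+μ)/(μ*p.2) := by
          rw [div_le_div_iff₀ (by positivity) (by positivity), hadef]
          nlinarith
        have hb2 : 2 * p.2 * (L:ℝ) / (μ * a ^ 2) ≤ 8*(L:ℝ)*(1+μ)^2/(μ*p.2) := by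
          rw [div_le_div_iff₀ (by positivity) (by positivity), hadef]
          have hsq : p.2 * p.2 ≤ ((1+μ)*G) * ((1+μ)*G) :=
            mul_le_mul hcase hcase hp2.le (by positivity)
          nlinarith [mul_le_mul_of_nonneg_left hsq
            (by positivity : (0:ℝ) ≤ 2 * (L:ℝ) * μ)]
        rw [hKrdef, hsum]
        linarith
      · apply LipschitzOnWith.of_dist_le_mul
        intro q hq q' hq'
        rw [Real.coe_toNNReal _ hKrpos.le, hform q hq, hform q' hq', Real.dist_eq]
        have hb : a ≤ g q.1 := hgq q hq
        have hb' : a ≤ g q'.1 := hgq q' hq'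
        have hbpos : 0 < g q.1 := lt_of_lt_of_le ha hb
        have hbpos' : 0 < g q'.1 := lt_of_lt_of_le ha hb'
        have hd1 : |q.1 - q'.1| ≤ dist q q' := by
          rw [← Real.dist_eq, Prod.dist_eq]; exact le_max_left _ _
        have hd2 : |q.2 - q'.2| ≤ dist q q' := by
          rw [← Real.dist_eq, Prod.dist_eq]; exact le_max_right _ _
        have hkey : (q.2 - g q.1) / (μ * g q.1) - (q'.2 - g q'.1) / (μ * g q'.1)
            = (q.2 - q'.2) / (μ * g q.1)
              + q'.2 * (g q'.1 - g q.1) / (μ * g q.1 * g q'.1) := by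
          field_simp
          ring
        calc |min 1 (max 0 ((q.2 - g q.1) / (μ * g q.1)))
              - min 1 (max 0 ((q'.2 - g q'.1) / (μ * g q'.1)))|
            ≤ |(q.2 - g q.1) / (μ * g q.1) - (q'.2 - g q'.1) / (μ * g q'.1)| :=
              clamp_abs_le _ _
          _ = |(q.2 - q'.2) / (μ * g q.1)
              + q'.2 * (g q'.1 - g q.1) / (μ * g q.1 * g q'.1)| := by rw [hkey]
          _ ≤ |(q.2 - q'.2) / (μ * g q.1)|
              + |q'.2 * (g q'.1 - g q.1) / (μ * g q.1 * g q'.1)| := abs_add_le _ _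
          _ ≤ |q.2 - q'.2| / (μ * a)
              + 2 * p.2 * ((L:ℝ) * |q.1 - q'.1|) / (μ * a * a) := by
              gcongr ?_ + ?_
              · rw [abs_div, abs_of_pos (by positivity : (0:ℝ) < μ * g q.1)]
                gcongr
              · rw [abs_div, abs_mul,
                  abs_of_pos (by positivity : (0:ℝ) < μ * g q.1 * g q'.1)]
                have e1 : |q'.2| ≤ 2 * p.2 := by
                  rw [abs_of_pos (hq2pos q' hq')]; exact hq2ub q' hq'
                have e2 : |g q'.1 - g q.1| ≤ (L:ℝ) * |q.1 - q'.1| := by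
                  have := hgl q'.1 q.1
                  rwa [abs_sub_comm q'.1 q.1] at this
                gcongr
          _ ≤ dist q q' / (μ * a)
              + 2 * p.2 * ((L:ℝ) * dist q q') / (μ * a * a) := by gcongr
          _ = Kr * dist q q' := by rw [hKrdef]; field_simp
  constructor
  · intro p hp2
    obtain ⟨r, hr, K, _, hlip⟩ := key p hp2
    exact ⟨K, Metric.ball p r, Metric.ball_mem_nhds p hr, hlip⟩
  · have hdiff : ∀ᵐ q : ℝ × ℝ ∂volume, 0 < q.2 → DifferentiableAt ℝ χ q := by
      choose! r hr K hK hlip using key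
      obtain ⟨t, hts, htc, htU⟩ := TopologicalSpace.countable_cover_nhdsWithin
        (s := {q : ℝ × ℝ | 0 < q.2}) (f := fun q => Metric.ball q (r q))
        (fun q hq => mem_nhdsWithin_of_mem_nhds (Metric.ball_mem_nhds q (hr q hq)))
      have hball : ∀ q ∈ t, ∀ᵐ x : ℝ × ℝ ∂volume,
          x ∈ Metric.ball q (r q) → DifferentiableAt ℝ χ x := by
        intro q hq
        obtain ⟨G, hG, hEq⟩ := (hlip q (hts hq)).extend_real
        filter_upwards [hG.ae_differentiableAt (μ := volume)] with x hx hxball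
        exact hx.congr_of_eventuallyEq
          (Filter.eventually_of_mem (Metric.isOpen_ball.mem_nhds hxball)
            (fun y hy => hEq hy))
      filter_upwards [(ae_ball_iff htc).2 hball] with x hx hx2
      obtain ⟨q, hq, hxq⟩ := Set.mem_iUnion₂.1 (htU hx2)
      exact hx q hq hxq
    filter_upwards [hdiff] with q hq hq2
    refine ⟨hq hq2, ?_⟩
    obtain ⟨r, hr, K, hK, hlip⟩ := key q hq2
    exact le_trans
      ((hq hq2).hasFDerivAt.le_of_lipschitzOn (Metric.ball_mem_nhds q hr) hlip) hK
end

section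
/- Let g : ℝ → [0,∞) be Lipschitz, μ > 0, and let χ₀ be the cutoff function that is 0 below the graph of g, 1 above the graph of (1+μ)g, and linearly interpolating in between. Then for every Carleson box B = (a,b) × (0, b−a) with a < b, the integral ∫_B |∇χ₀| dA ≤ C·log(1+μ)·(b−a) for a constant C depending only on the Lipschitz constant of g and μ; i.e., |∇χ₀| dA is a Carleson measure on ℂ⁺. -/
/-!
Below the graph of `g` and above the graph of `(1 + μ) g` the cutoff `χ` is locally constant,
and both graphs are Lebesgue-null, so almost everywhere `∇χ` is supported in the open strip
`g(ξ) < η < (1 + μ) g(ξ)`. There `χ = η / (μ g) - 1 / μ` with `g` `L`-Lipschitz and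
`g > η / (1 + μ)`, so `χ` is locally `C / η`-Lipschitz with `C = (1 + μ)(1 + (1 + μ) L) / μ`.
Each vertical section of the strip contributes `∫_g^{(1+μ)g} C / η dη = C log (1 + μ)`, and
integrating over `ξ ∈ (a, b)` gives the bound.
-/

open MeasureTheory Set Filter Topology

theorem ae_prod_snd_ne {α : Type*} [MeasurableSpace α] (ν : Measure α) {f : α → ℝ}
    (hf : Measurable f) : ∀ᵐ p ∂ν.prod volume, p.2 ≠ f p.1 := by
  refine (measure_eq_zero_iff_ae_notMem (s := {p : α × ℝ | p.2 = f p.1})).1 ?_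
  rw [Measure.prod_apply (measurableSet_graph hf)]
  have hsection : ∀ x : α, Prod.mk x ⁻¹' {p : α × ℝ | p.2 = f p.1} = {f x} := fun x => by
    ext; simp
  simp [hsection]

theorem fderiv_eq_zero_of_eventuallyEq_const {𝕜 E F : Type*} [NontriviallyNormedField 𝕜]
    [NormedAddCommGroup E] [NormedSpace 𝕜 E] [NormedAddCommGroup F] [NormedSpace 𝕜 F]
    {f : E → F} {x : E} {c : F} (h : f =ᶠ[𝓝 x] fun _ => c) : fderiv 𝕜 f x = 0 := by
  rw [h.fderiv_eq, fderiv_const_apply]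

theorem lintegral_Ioo_ofReal_div {K c d : ℝ} (hK : 0 ≤ K) (hc : 0 < c) (hcd : c ≤ d) :
    ∫⁻ η in Ioo c d, ENNReal.ofReal (K / η) = ENNReal.ofReal (K * Real.log (d / c)) := by
  have hpos : ∀ η ∈ Icc c d, 0 < η := fun η hη => hc.trans_le hη.1
  rw [← ofReal_integral_eq_lintegral_ofReal, ← integral_Ioc_eq_integral_Ioo,
    ← intervalIntegral.integral_of_le hcd]
  · simp only [div_eq_mul_inv, intervalIntegral.integral_const_mul,
      integral_inv_of_pos hc (hc.trans_le hcd)]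
  · exact ((continuousOn_const.div continuousOn_id fun η hη =>
      (hpos η hη).ne').integrableOn_Icc).mono_set Ioo_subset_Icc_self
  · filter_upwards [ae_restrict_mem measurableSet_Ioo] with η hη
    exact div_nonneg hK (hpos η (Ioo_subset_Icc_self hη)).le

theorem abs_strip_cutoff_sub_le {μ L x x₀ η η₀ d : ℝ} (hμ : 0 < μ) (hL : 0 ≤ L) (hη₀ : 0 < η₀)
    (hx : η₀ < (1 + μ) * x) (hx₀ : η₀ < (1 + μ) * x₀) (hη : |η - η₀| ≤ d)
    (hxd : |x - x₀| ≤ L * d) :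
    |(η - x) / (μ * x) - (η₀ - x₀) / (μ * x₀)| ≤ (1 + μ) * (1 + (1 + μ) * L) / μ / η₀ * d := by
  have hx0 : 0 < x := by nlinarith
  have hx₀0 : 0 < x₀ := by nlinarith
  have hd : 0 ≤ d := (abs_nonneg _).trans hη
  have hsplit : (η - x) / (μ * x) - (η₀ - x₀) / (μ * x₀) =
      (η - η₀) / (μ * x) + η₀ * (x₀ - x) / (μ * x * x₀) := by
    field_simp; ring
  have hinv : 1 / x ≤ (1 + μ) / η₀ := by
    rw [div_le_div_iff₀ hx0 hη₀]; linarith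
  have hinv₀ : 1 / x₀ ≤ (1 + μ) / η₀ := by
    rw [div_le_div_iff₀ hx₀0 hη₀]; linarith
  calc |(η - x) / (μ * x) - (η₀ - x₀) / (μ * x₀)|
      ≤ |η - η₀| / (μ * x) + η₀ * |x - x₀| / (μ * x * x₀) := by
        rw [hsplit]
        refine (abs_add_le _ _).trans_eq ?_
        rw [abs_div, abs_div, abs_mul η₀, abs_sub_comm x₀, abs_of_pos hη₀,
          abs_of_pos (by positivity : 0 < μ * x), abs_of_pos (by positivity : 0 < μ * x * x₀)]
    _ ≤ d / (μ * x) + η₀ * (L * d) / (μ * x * x₀) := by gcongr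
    _ = (d + η₀ * L * d * (1 / x₀)) * (1 / x) / μ := by field_simp
    _ ≤ (d + η₀ * L * d * ((1 + μ) / η₀)) * ((1 + μ) / η₀) / μ := by gcongr
    _ = (1 + μ) * (1 + (1 + μ) * L) / μ / η₀ * d := by field_simp

theorem norm_fderiv_le_of_mem_strip {L : NNReal} {μ : ℝ} (hμ : 0 < μ) {g : ℝ → ℝ}
    {χ : ℝ × ℝ → ℝ} (hg : LipschitzWith L g)
    (hmid : ∀ ξ η : ℝ, 0 < g ξ → g ξ ≤ η → η ≤ (1 + μ) * g ξ →
      χ (ξ, η) = (η - g ξ) / (μ * g ξ))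
    {p : ℝ × ℝ} (hp : p.2 ∈ Ioo (g p.1) ((1 + μ) * g p.1)) :
    ‖fderiv ℝ χ p‖ ≤ (1 + μ) * (1 + (1 + μ) * L) / μ / p.2 := by
  have hη₀ : 0 < p.2 := by nlinarith [hp.1, hp.2]
  have hcont : ContinuousAt (fun q : ℝ × ℝ => g q.1) p :=
    (hg.continuous.comp continuous_fst).continuousAt
  have hcont' : ContinuousAt (fun q : ℝ × ℝ => (1 + μ) * g q.1) p :=
    continuousAt_const.mul hcont
  refine norm_fderiv_le_of_lip' ℝ (by positivity) ?_
  filter_upwards [hcont.eventually_lt continuousAt_snd hp.1,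
    continuousAt_snd.eventually_lt hcont' hp.2,
    continuousAt_const.eventually_lt hcont' hp.2] with q hq₁ hq₂ hpq
  have hχ : ∀ r : ℝ × ℝ, r.2 ∈ Ioo (g r.1) ((1 + μ) * g r.1) →
      χ r = (r.2 - g r.1) / (μ * g r.1) := fun r hr =>
    hmid r.1 r.2 (by nlinarith [hr.1, hr.2]) hr.1.le hr.2.le
  have hsnd : |q.2 - p.2| ≤ ‖q - p‖ := norm_snd_le (q - p)
  have hfst : |g q.1 - g p.1| ≤ L * ‖q - p‖ := by
    simpa only [Real.dist_eq] using
      (hg.dist_le_mul q.1 p.1).trans (by gcongr; exact norm_fst_le (q - p))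
  rw [Real.norm_eq_abs, hχ q ⟨hq₁, hq₂⟩, hχ p hp]
  exact abs_strip_cutoff_sub_le hμ L.coe_nonneg hη₀ hpq hp.2 hsnd hfst

theorem ae_ofReal_norm_fderiv_le_indicator {L : NNReal} {μ : ℝ} (hμ : 0 < μ) {g : ℝ → ℝ}
    {χ : ℝ × ℝ → ℝ} (hg : LipschitzWith L g)
    (hbelow : ∀ ξ η : ℝ, 0 < η → η < g ξ → χ (ξ, η) = 0)
    (hmid : ∀ ξ η : ℝ, 0 < g ξ → g ξ ≤ η → η ≤ (1 + μ) * g ξ →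
      χ (ξ, η) = (η - g ξ) / (μ * g ξ))
    (habove : ∀ ξ η : ℝ, 0 < η → (1 + μ) * g ξ < η → χ (ξ, η) = 1) :
    ∀ᵐ p : ℝ × ℝ, 0 < p.2 → ENNReal.ofReal ‖fderiv ℝ χ p‖ ≤
      (regionBetween g (fun ξ => (1 + μ) * g ξ) univ).indicator
        (fun q => ENNReal.ofReal ((1 + μ) * (1 + (1 + μ) * L) / μ / q.2)) p := by
  have hgc : Continuous fun q : ℝ × ℝ => g q.1 := hg.continuous.comp continuous_fst
  have hgc' : Continuous fun q : ℝ × ℝ => (1 + μ) * g q.1 := continuous_const.mul hgc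
  filter_upwards [ae_prod_snd_ne volume hg.continuous.measurable,
    ae_prod_snd_ne volume (hg.continuous.measurable.const_mul (1 + μ))] with p hp₁ hp₂ hp₀
  rcases hp₁.lt_or_gt with hlow | hlow
  · have hzero : χ =ᶠ[𝓝 p] fun _ => 0 := by
      filter_upwards [continuousAt_const.eventually_lt continuousAt_snd hp₀,
        continuousAt_snd.eventually_lt hgc.continuousAt hlow] with q hq₀ hq
      exact hbelow q.1 q.2 hq₀ hq
    simp [fderiv_eq_zero_of_eventuallyEq_const hzero]
  rcases hp₂.lt_or_gt with hhigh | hhigh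
  · have hp : p ∈ regionBetween g (fun ξ => (1 + μ) * g ξ) univ := ⟨mem_univ _, hlow, hhigh⟩
    rw [indicator_of_mem hp]
    exact ENNReal.ofReal_le_ofReal (norm_fderiv_le_of_mem_strip hμ hg hmid ⟨hlow, hhigh⟩)
  · have hone : χ =ᶠ[𝓝 p] fun _ => 1 := by
      filter_upwards [continuousAt_const.eventually_lt continuousAt_snd hp₀,
        hgc'.continuousAt.eventually_lt continuousAt_snd hhigh] with q hq₀ hq
      exact habove q.1 q.2 hq₀ hq
    simp [fderiv_eq_zero_of_eventuallyEq_const hone]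

theorem setLIntegral_indicator_regionBetween_le {g : ℝ → ℝ} {μ K : ℝ} (hμ : 0 ≤ μ)
    (hK : 0 ≤ K) (s t : Set ℝ) :
    ∫⁻ p in s ×ˢ t, (regionBetween g (fun ξ => (1 + μ) * g ξ) univ).indicator
        (fun q => ENNReal.ofReal (K / q.2)) p ≤
      ENNReal.ofReal (K * Real.log (1 + μ)) * volume s := by
  have hsection : ∀ ξ, ∫⁻ η in t, (regionBetween g (fun ξ => (1 + μ) * g ξ) univ).indicator
      (fun q => ENNReal.ofReal (K / q.2)) (ξ, η) ≤ ENNReal.ofReal (K * Real.log (1 + μ)) := by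
    intro ξ
    have hind : ∀ η, (regionBetween g (fun ξ => (1 + μ) * g ξ) univ).indicator
        (fun q => ENNReal.ofReal (K / q.2)) (ξ, η) =
        (Ioo (g ξ) ((1 + μ) * g ξ)).indicator (fun η => ENNReal.ofReal (K / η)) η := by
      intro η
      simp [regionBetween, indicator_apply]
    simp only [hind]
    refine (setLIntegral_le_lintegral _ _).trans ?_
    rw [lintegral_indicator measurableSet_Ioo]
    rcases le_or_gt (g ξ) 0 with hg | hg
    · rw [Ioo_eq_empty (by nlinarith)]
      simp
    · rw [lintegral_Ioo_ofReal_div hK hg (by nlinarith), mul_div_cancel_right₀ _ hg.ne']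
  calc ∫⁻ p in s ×ˢ t, _ ≤ ∫⁻ ξ in s, ∫⁻ η in t, _ := by
        rw [Measure.volume_eq_prod, ← Measure.prod_restrict]
        exact lintegral_prod_le _
    _ ≤ ∫⁻ _ in s, ENNReal.ofReal (K * Real.log (1 + μ)) := lintegral_mono hsection
    _ = ENNReal.ofReal (K * Real.log (1 + μ)) * volume s := setLIntegral_const _ _

/-- `|∇χ₀| dA` is a Carleson measure on the upper half-plane:
`∫_B |∇χ₀| ≤ C·log(1+μ)·(b−a)` on every Carleson box `B = (a,b)×(0,b−a)`. -/
theorem stmt_5 (L : NNReal) (μ : ℝ) (hμ : 0 < μ) :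
    ∃ C > 0, ∀ (g : ℝ → ℝ) (χ : ℝ × ℝ → ℝ),
      LipschitzWith L g → (∀ ξ, 0 ≤ g ξ) →
      (∀ ξ η : ℝ, 0 < η → η < g ξ → χ (ξ, η) = 0) →
      (∀ ξ η : ℝ, 0 < g ξ → g ξ ≤ η → η ≤ (1 + μ) * g ξ →
        χ (ξ, η) = (η - g ξ) / (μ * g ξ)) →
      (∀ ξ η : ℝ, 0 < η → (1 + μ) * g ξ < η → χ (ξ, η) = 1) →
      ∀ a b : ℝ, a < b →
        ∫⁻ p in Set.Ioo a b ×ˢ Set.Ioo (0 : ℝ) (b - a),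
            ENNReal.ofReal ‖fderiv ℝ χ p‖ ≤
          ENNReal.ofReal (C * Real.log (1 + μ) * (b - a)) := by
  set C := (1 + μ) * (1 + (1 + μ) * L) / μ
  have hC : 0 < C := by positivity
  refine ⟨C, hC, fun g χ hg _ hbelow hmid habove a b _ => ?_⟩
  have hbound := ae_ofReal_norm_fderiv_le_indicator hμ hg hbelow hmid habove
  calc ∫⁻ p in Ioo a b ×ˢ Ioo 0 (b - a), ENNReal.ofReal ‖fderiv ℝ χ p‖
      ≤ ∫⁻ p in Ioo a b ×ˢ Ioo 0 (b - a),
          (regionBetween g (fun ξ => (1 + μ) * g ξ) univ).indicator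
            (fun q => ENNReal.ofReal (C / q.2)) p := by
        refine lintegral_mono_ae ?_
        filter_upwards [ae_restrict_mem (measurableSet_Ioo.prod measurableSet_Ioo),
          ae_restrict_of_ae hbound] with p hp hle
        exact hle hp.2.1
    _ ≤ ENNReal.ofReal (C * Real.log (1 + μ)) * volume (Ioo a b) :=
        setLIntegral_indicator_regionBetween_le hμ.le hC.le _ _
    _ = ENNReal.ofReal (C * Real.log (1 + μ) * (b - a)) := by
        have hlog : 0 ≤ Real.log (1 + μ) := Real.log_nonneg (by linarith)
        rw [Real.volume_Ioo, ← ENNReal.ofReal_mul (by positivity)]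
end

section
/- Fix k > 0, μ > 0 and R > 0, and let T = {ξ+iη : kξ < η < (1+μ)kξ} ∩ {|z| < R} be a truncated angular sector in ℂ⁺. Then there is a constant C = C(k,μ,R) such that for every ζ ∈ ℂ⁺, |ζ| · ∫_T dA(z)/(|z|·|ζ−z|·|ζ−z̄|) ≤ C. -/
/-!
For `z` in the sector the angle condition `k · Re z < Im z` gives
`|ζ - z̄|² ≥ k²/(1+k²) · |ζ| |z|`, so the integrand is at most a constant times
`|ζ|^(-1/2) |z|^(-3/2) |ζ - z|^(-1)`. Over the whole plane the substitution `z = ζ w` turns the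
integral of the latter into `|ζ|^(-1/2) ∫ |w|^(-3/2) |1 - w|^(-1) dw`. This last integral is
finite because the kernel is dominated by `|w|^(-3/2) (1+|w|)^(-1) + |1-w|^(-1) (1+|1-w|)^(-3/2)`,
and each summand is integrable in the plane: its singular exponent is below `2`, its total decay
exponent `5/2` above.
-/

open MeasureTheory Metric Set Module ComplexConjugate
open scoped ENNReal

lemma rpow_neg_le_rpow_mul_rpow_neg {x y c r : ℝ} (hx : 0 < x) (hc : 0 < c) (hxy : x ≤ c * y)
    (hr : 0 ≤ r) : y ^ (-r) ≤ c ^ r * x ^ (-r) :=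
  calc y ^ (-r) ≤ (x / c) ^ (-r) :=
        Real.rpow_le_rpow_of_nonpos (by positivity) (by rwa [div_le_iff₀' hc]) (by linarith)
    _ = c ^ r * x ^ (-r) := by
        rw [Real.div_rpow hx.le hc.le, Real.rpow_neg hc.le, div_inv_eq_mul, mul_comm]

lemma rpow_neg_mul_rpow_neg_le_add {a b p q : ℝ} (ha : 0 ≤ a) (hb : 0 ≤ b) (hab : 1 ≤ a + b)
    (hp : 0 ≤ p) (hq : 0 ≤ q) :
    a ^ (-p) * b ^ (-q) ≤
      3 ^ q * (a ^ (-p) * (1 + a) ^ (-q)) + 3 ^ p * (b ^ (-q) * (1 + b) ^ (-p)) := by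
  rcases le_total a b with h | h
  · calc a ^ (-p) * b ^ (-q) ≤ a ^ (-p) * (3 ^ q * (1 + a) ^ (-q)) := by
          gcongr; exact rpow_neg_le_rpow_mul_rpow_neg (by positivity) (by norm_num) (by linarith) hq
      _ ≤ _ := by
          rw [mul_left_comm]; exact le_add_of_nonneg_right (by positivity)
  · calc a ^ (-p) * b ^ (-q) ≤ (3 ^ p * (1 + b) ^ (-p)) * b ^ (-q) := by
          gcongr; exact rpow_neg_le_rpow_mul_rpow_neg (by positivity) (by norm_num) (by linarith) hp
      _ ≤ _ := by
          rw [mul_assoc, mul_comm ((1 + b) ^ (-p))]; exact le_add_of_nonneg_left (by positivity)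

section FiniteDimensional

variable {E : Type*} [NormedAddCommGroup E] [NormedSpace ℝ E] [FiniteDimensional ℝ E]
  [MeasurableSpace E] [BorelSpace E] (μ : Measure E) [μ.IsAddHaarMeasure]

lemma integrable_norm_rpow_neg_mul_one_add_norm_rpow_neg {p q : ℝ} (hp : 0 ≤ p)
    (hpd : p < finrank ℝ E) (hdq : (finrank ℝ E : ℝ) < p + q) :
    Integrable (fun x : E => ‖x‖ ^ (-p) * (1 + ‖x‖) ^ (-q)) μ := by
  have hd : 1 ≤ finrank ℝ E := by exact_mod_cast (hp.trans_lt hpd : (0 : ℝ) < finrank ℝ E)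
  have hmeas : AEStronglyMeasurable (fun x : E => ‖x‖ ^ (-p) * (1 + ‖x‖) ^ (-q)) μ := by
    fun_prop
  rw [← integrableOn_univ, ← union_compl_self (ball (0 : E) 1)]
  refine IntegrableOn.union ?_ ?_
  · refine integrableOn_ball_of_norm_le_rpow (C := 1) hd hpd (ae_of_all _ fun x => ?_) hmeas
    rw [one_mul, Real.norm_of_nonneg (by positivity)]
    exact mul_le_of_le_one_right (by positivity)
      (Real.rpow_le_one_of_one_le_of_nonpos (by simp) (by linarith))
  · refine ((integrable_one_add_norm hdq).const_mul (2 ^ p)).integrableOn.mono' hmeas.restrict ?_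
    refine (ae_restrict_iff' measurableSet_ball.compl).2 (ae_of_all _ fun x hx => ?_)
    have hx : 1 ≤ ‖x‖ := by simpa using hx
    rw [Real.norm_of_nonneg (by positivity), neg_add, Real.rpow_add (by positivity), ← mul_assoc]
    gcongr
    exact rpow_neg_le_rpow_mul_rpow_neg (by positivity) (by norm_num) (by linarith) hp

lemma integrable_norm_rpow_neg_mul_norm_sub_rpow_neg {p q : ℝ} (hp : 0 ≤ p) (hq : 0 ≤ q)
    (hpd : p < finrank ℝ E) (hqd : q < finrank ℝ E) (hdpq : (finrank ℝ E : ℝ) < p + q)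
    {v : E} (hv : 1 ≤ ‖v‖) :
    Integrable (fun x : E => ‖x‖ ^ (-p) * ‖v - x‖ ^ (-q)) μ := by
  have hF := (integrable_norm_rpow_neg_mul_one_add_norm_rpow_neg μ hp hpd hdpq).const_mul (3 ^ q)
  have hG := ((integrable_norm_rpow_neg_mul_one_add_norm_rpow_neg μ (q := p) hq hqd
    (by linarith)).comp_sub_left v).const_mul (3 ^ p)
  refine (hF.add hG).mono' (by fun_prop) (ae_of_all _ fun x => ?_)
  rw [Real.norm_of_nonneg (by positivity)]
  refine rpow_neg_mul_rpow_neg_le_add (norm_nonneg _) (norm_nonneg _) ?_ hp hq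
  simpa using hv.trans (norm_le_norm_add_norm_sub' v x)

end FiniteDimensional

lemma Complex.lintegral_comp_mul_left (f : ℂ → ℝ≥0∞) {a : ℂ} (ha : a ≠ 0) :
    ∫⁻ z, f (a * z) = ENNReal.ofReal (‖a‖ ^ 2)⁻¹ * ∫⁻ z, f z := by
  have hdet : LinearMap.det (Algebra.lmul ℝ ℂ a) = ‖a‖ ^ 2 := by
    rw [← Algebra.norm_apply, Algebra.norm_complex_apply, Complex.normSq_eq_norm_sq]
  have hmap : Measure.map (a * ·) volume = ENNReal.ofReal (‖a‖ ^ 2)⁻¹ • (volume : Measure ℂ) := by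
    have := Measure.map_linearMap_addHaar_eq_smul_addHaar volume
      (f := Algebra.lmul ℝ ℂ a) (by rw [hdet]; positivity)
    rwa [hdet, abs_of_pos (by positivity)] at this
  calc ∫⁻ z, f (a * z) = ∫⁻ z, f z ∂(Measure.map (a * ·) volume) :=
        ((Homeomorph.mulLeft₀ a ha).measurableEmbedding.lintegral_map f).symm
    _ = _ := by rw [hmap, lintegral_smul_measure, smul_eq_mul]

lemma Complex.lintegral_norm_rpow_neg_mul_norm_sub_rpow_neg {p q : ℝ} {ζ : ℂ} (hζ : ζ ≠ 0) :
    ∫⁻ z, ENNReal.ofReal (‖z‖ ^ (-p) * ‖ζ - z‖ ^ (-q)) =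
      ENNReal.ofReal (‖ζ‖ ^ (2 - p - q)) *
        ∫⁻ w : ℂ, ENNReal.ofReal (‖w‖ ^ (-p) * ‖1 - w‖ ^ (-q)) := by
  have hρ : 0 < ‖ζ‖ := norm_pos_iff.2 hζ
  have hscale : ∀ w : ℂ, ENNReal.ofReal (‖ζ * w‖ ^ (-p) * ‖ζ - ζ * w‖ ^ (-q)) =
      ENNReal.ofReal (‖ζ‖ ^ (-p - q)) * ENNReal.ofReal (‖w‖ ^ (-p) * ‖1 - w‖ ^ (-q)) := by
    intro w
    rw [← ENNReal.ofReal_mul (by positivity), ← mul_one_sub, norm_mul, norm_mul,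
      Real.mul_rpow hρ.le (norm_nonneg _), Real.mul_rpow hρ.le (norm_nonneg _),
      show -p - q = -p + -q by ring, Real.rpow_add hρ]
    ring_nf
  have := Complex.lintegral_comp_mul_left
    (fun z => ENNReal.ofReal (‖z‖ ^ (-p) * ‖ζ - z‖ ^ (-q))) hζ
  simp only [hscale, lintegral_const_mul' _ _ ENNReal.ofReal_ne_top] at this
  rw [show 2 - p - q = 2 + (-p - q) by ring, Real.rpow_add hρ, Real.rpow_two,
    ENNReal.ofReal_mul (by positivity), mul_assoc, this, ← mul_assoc,
    ← ENNReal.ofReal_mul (by positivity), mul_inv_cancel₀ (by positivity), ENNReal.ofReal_one,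
    one_mul]

lemma mul_norm_mul_norm_le_norm_sub_conj_sq {k : ℝ} (hk : 0 ≤ k) {ζ z : ℂ} (hζ : 0 ≤ ζ.im)
    (hz : 0 ≤ z.re) (hkz : k * z.re ≤ z.im) :
    k ^ 2 / (1 + k ^ 2) * (‖ζ‖ * ‖z‖) ≤ ‖ζ - conj z‖ ^ 2 := by
  have him : 0 ≤ z.im := (mul_nonneg hk hz).trans hkz
  have hz2 : ‖z‖ ^ 2 = z.re ^ 2 + z.im ^ 2 := by
    rw [Complex.sq_norm, Complex.normSq_apply]; ring
  -- `(2 + k²) / (2 (1 + k²))` is the AM-GM upper bound for the cosine `1 / √(1 + k²)`.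
  have hre : 2 * (1 + k ^ 2) * z.re ≤ (2 + k ^ 2) * ‖z‖ := by
    have hsq : (k * z.re) ^ 2 ≤ z.im ^ 2 := pow_le_pow_left₀ (mul_nonneg hk hz) hkz 2
    refine (pow_le_pow_iff_left₀ (by positivity) (by positivity) two_ne_zero).1 ?_
    rw [mul_pow _ ‖z‖, hz2]
    nlinarith [mul_le_mul_of_nonneg_left hsq (sq_nonneg (2 + k ^ 2)),
      mul_nonneg (by positivity : (0 : ℝ) ≤ (1 + k ^ 2) * k ^ 4) (sq_nonneg z.re)]
  have hdist : ‖ζ - conj z‖ ^ 2 = ‖ζ‖ ^ 2 + ‖z‖ ^ 2 - 2 * (ζ.re * z.re - ζ.im * z.im) := by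
    rw [Complex.sq_norm, Complex.sq_norm, Complex.sq_norm, Complex.normSq_apply,
      Complex.normSq_apply, Complex.normSq_apply]
    simp only [Complex.sub_re, Complex.sub_im, Complex.conj_re, Complex.conj_im]
    ring
  have hζre : ζ.re * z.re ≤ ‖ζ‖ * z.re := mul_le_mul_of_nonneg_right (Complex.re_le_norm ζ) hz
  rw [div_mul_eq_mul_div, div_le_iff₀ (by positivity), hdist]
  nlinarith [mul_nonneg hζ him, mul_le_mul_of_nonneg_left hre (norm_nonneg ζ),
    mul_nonneg (by positivity : (0 : ℝ) ≤ 1 + k ^ 2) (sq_nonneg (‖ζ‖ - ‖z‖))]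

lemma one_div_mul_mul_le_of_mul_le_sq {a b c ρ κ : ℝ} (ha : 0 < a) (hb : 0 ≤ b) (hc : 0 ≤ c)
    (hρ : 0 < ρ) (hκ : 0 < κ) (habc : κ * (ρ * a) ≤ c ^ 2) :
    1 / (a * b * c) ≤
      κ ^ (-(1 / 2 : ℝ)) * ρ ^ (-(1 / 2 : ℝ)) * (a ^ (-(3 / 2 : ℝ)) * b ^ (-1 : ℝ)) := by
  rcases hb.eq_or_lt with rfl | hb
  · simp
  have hs : √(κ * (ρ * a)) ≤ c := Real.sqrt_le_iff.2 ⟨hc, habc⟩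
  have hrpow : κ ^ (-(1 / 2 : ℝ)) * ρ ^ (-(1 / 2 : ℝ)) * (a ^ (-(3 / 2 : ℝ)) * b ^ (-1 : ℝ)) =
      1 / (a * b * √(κ * (ρ * a))) := by
    rw [Real.sqrt_eq_rpow, Real.mul_rpow hκ.le (by positivity), Real.mul_rpow hρ.le ha.le,
      Real.rpow_neg hκ.le, Real.rpow_neg hρ.le, Real.rpow_neg ha.le, Real.rpow_neg_one,
      show (3 / 2 : ℝ) = 1 + 1 / 2 by norm_num, Real.rpow_add ha, Real.rpow_one]
    field_simp
  rw [hrpow]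
  gcongr

lemma one_div_norm_mul_norm_sub_mul_norm_sub_conj_le {k : ℝ} (hk : 0 < k) {ζ z : ℂ}
    (hζ : 0 < ζ.im) (hz : 0 < z.re) (hkz : k * z.re ≤ z.im) :
    1 / (‖z‖ * ‖ζ - z‖ * ‖ζ - conj z‖) ≤
      (k ^ 2 / (1 + k ^ 2)) ^ (-(1 / 2 : ℝ)) * ‖ζ‖ ^ (-(1 / 2 : ℝ)) *
        (‖z‖ ^ (-(3 / 2 : ℝ)) * ‖ζ - z‖ ^ (-1 : ℝ)) :=
  one_div_mul_mul_le_of_mul_le_sq (norm_pos_iff.2 fun h => by simp [h] at hz) (norm_nonneg _)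
    (norm_nonneg _) (norm_pos_iff.2 fun h => by simp [h] at hζ) (by positivity)
    (mul_norm_mul_norm_le_norm_sub_conj_sq hk.le hζ.le hz.le hkz)

lemma norm_mul_lintegral_majorant_eq {A : ℝ} (hA : 0 ≤ A) {ζ : ℂ} (hζ : ζ ≠ 0) :
    ENNReal.ofReal ‖ζ‖ * ∫⁻ z, ENNReal.ofReal (A * ‖ζ‖ ^ (-(1 / 2 : ℝ)) *
        (‖z‖ ^ (-(3 / 2 : ℝ)) * ‖ζ - z‖ ^ (-1 : ℝ))) =
      ENNReal.ofReal A * ∫⁻ w : ℂ, ENNReal.ofReal (‖w‖ ^ (-(3 / 2 : ℝ)) * ‖1 - w‖ ^ (-1 : ℝ)) := by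
  have hρ : 0 < ‖ζ‖ := norm_pos_iff.2 hζ
  have hρρ : ‖ζ‖ * (A * ‖ζ‖ ^ (-(1 / 2 : ℝ))) * ‖ζ‖ ^ (2 - 3 / 2 - 1 : ℝ) = A := by
    rw [mul_assoc, mul_assoc, ← Real.rpow_add hρ,
      show -(1 / 2 : ℝ) + (2 - 3 / 2 - 1) = -1 by norm_num, Real.rpow_neg_one]
    field_simp
  simp_rw [ENNReal.ofReal_mul (by positivity : 0 ≤ A * ‖ζ‖ ^ (-(1 / 2 : ℝ)))]
  rw [lintegral_const_mul' _ _ ENNReal.ofReal_ne_top,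
    Complex.lintegral_norm_rpow_neg_mul_norm_sub_rpow_neg hζ, ← mul_assoc, ← mul_assoc,
    ← ENNReal.ofReal_mul (by positivity), ← ENNReal.ofReal_mul (by positivity), hρρ]

theorem stmt_6_general (k μ R : ℝ) (hk : 0 < k) (hμ : 0 < μ) :
    ∃ C : ℝ, ∀ ζ : ℂ, 0 < ζ.im →
      ENNReal.ofReal ‖ζ‖ *
        ∫⁻ z in {z : ℂ | k * z.re < z.im ∧ z.im < (1 + μ) * k * z.re ∧ ‖z‖ < R},
          ENNReal.ofReal (1 / (‖z‖ * ‖ζ - z‖ * ‖ζ - starRingEnd ℂ z‖)) ≤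
      ENNReal.ofReal C := by
  set A : ℝ := (k ^ 2 / (1 + k ^ 2)) ^ (-(1 / 2 : ℝ))
  set J : ℝ≥0∞ := ∫⁻ w : ℂ, ENNReal.ofReal (‖w‖ ^ (-(3 / 2 : ℝ)) * ‖1 - w‖ ^ (-1 : ℝ))
  have hJ : J < ∞ := by
    refine (integrable_norm_rpow_neg_mul_norm_sub_rpow_neg volume (by norm_num) (by norm_num)
      ?_ ?_ ?_ (by simp)).lintegral_lt_top <;> norm_num [Complex.finrank_real_complex]
  refine ⟨A * J.toReal, fun ζ hζ => ?_⟩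
  have hpt : ∀ z ∈ {z : ℂ | k * z.re < z.im ∧ z.im < (1 + μ) * k * z.re ∧ ‖z‖ < R},
      ENNReal.ofReal (1 / (‖z‖ * ‖ζ - z‖ * ‖ζ - starRingEnd ℂ z‖)) ≤
        ENNReal.ofReal (A * ‖ζ‖ ^ (-(1 / 2 : ℝ)) * (‖z‖ ^ (-(3 / 2 : ℝ)) * ‖ζ - z‖ ^ (-1 : ℝ))) := by
    rintro z ⟨hkz, hzμ, -⟩
    have hre : 0 < z.re := pos_of_mul_pos_right (by nlinarith) (mul_pos hμ hk).le
    exact ENNReal.ofReal_le_ofReal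
      (one_div_norm_mul_norm_sub_mul_norm_sub_conj_le hk hζ hre hkz.le)
  calc _ ≤ ENNReal.ofReal ‖ζ‖ * ∫⁻ z, ENNReal.ofReal (A * ‖ζ‖ ^ (-(1 / 2 : ℝ)) *
          (‖z‖ ^ (-(3 / 2 : ℝ)) * ‖ζ - z‖ ^ (-1 : ℝ))) :=
        mul_le_mul_right ((setLIntegral_mono (by fun_prop) hpt).trans
          (setLIntegral_le_lintegral _ _)) _
    _ = ENNReal.ofReal A * J :=
        norm_mul_lintegral_majorant_eq (by positivity) fun h => by simp [h] at hζ
    _ = ENNReal.ofReal (A * J.toReal) := by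
        rw [ENNReal.ofReal_mul (by positivity), ENNReal.ofReal_toReal hJ.ne]

/-- Uniform bound `|ζ|·∫_T dA(z)/(|z||ζ−z||ζ−z̄|) ≤ C` over the truncated
angular sector `T = {kξ < η < (1+μ)kξ} ∩ {|z| < R}`. -/
theorem stmt_6 (k μ R : ℝ) (hk : 0 < k) (hμ : 0 < μ) (hR : 0 < R) :
    ∃ C : ℝ, ∀ ζ : ℂ, 0 < ζ.im →
      ENNReal.ofReal ‖ζ‖ *
        ∫⁻ z in {z : ℂ | k * z.re < z.im ∧ z.im < (1 + μ) * k * z.re ∧ ‖z‖ < R},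
          ENNReal.ofReal (1 / (‖z‖ * ‖ζ - z‖ * ‖ζ - starRingEnd ℂ z‖)) ≤
      ENNReal.ofReal C :=
  stmt_6_general k μ R hk hμ
end

section
/- Let Δ > 0, t₀ ∈ ℝ, and |f| ≤ 1, |φ₁'| ≤ 1/2. Then the tail integral j₁ = ∫_{[x,X]∖[t₀−Δ,t₀+Δ]} iΔ·z₁'(t)·f(t) / ((z₁(t)−z₀)(z₂(t)−z₀)) dt satisfies |j₁| ≤ 4, where z₀ = z₁(t₀), zⱼ(t) = t+iφⱼ(t), using |zⱼ(t)−z₀| ≥ |t−t₀| and |z₁'| ≤ 3/2. -/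
/-!
On the tails `|t - t₀| > Δ` each factor of the denominator has modulus at least `|t - t₀|`
(its real part), and the numerator has modulus at most `(3/2) Δ`. Hence the integrand is
dominated by `(3/2) Δ / (t - t₀)²`, whose integral over both tails is `(3/2) Δ · (2 / Δ) = 3`.
-/

open Set MeasureTheory Filter Topology Complex

section TailIntegral

variable {c Δ : ℝ}

lemma integral_Ioi_inv_sq_sub (hΔ : 0 < Δ) : ∫ t in Ioi (c + Δ), ((t - c) ^ 2)⁻¹ = Δ⁻¹ := by
  have hderiv : ∀ t ∈ Ici (c + Δ), HasDerivAt (fun s => -(s - c)⁻¹) ((t - c) ^ 2)⁻¹ t := by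
    intro t ht
    have hne : t - c ≠ 0 := by rw [mem_Ici] at ht; linarith
    exact (((hasDerivAt_id' t).sub_const c).inv hne).neg.congr_deriv
      (by rw [neg_div, neg_neg, one_div])
  have hlim : Tendsto (fun s => -(s - c)⁻¹) atTop (𝓝 0) := by
    simpa [sub_eq_add_neg] using
      (tendsto_inv_atTop_zero.comp (tendsto_atTop_add_const_right _ (-c) tendsto_id)).neg
  rw [integral_Ioi_of_hasDerivAt_of_nonneg' hderiv (fun t _ => by positivity) hlim]
  simp

lemma integral_Iic_inv_sq_sub (hΔ : 0 < Δ) : ∫ t in Iic (c - Δ), ((t - c) ^ 2)⁻¹ = Δ⁻¹ := by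
  rw [← integral_Ioi_inv_sq_sub (c := -c) hΔ, show c - Δ = -(-c + Δ) by ring,
    ← integral_comp_neg_Ioi]
  congr with t
  ring

lemma integrableOn_inv_sq_sub_tails (hΔ : 0 < Δ) :
    IntegrableOn (fun t => ((t - c) ^ 2)⁻¹) (Iic (c - Δ) ∪ Ioi (c + Δ)) := by
  -- A non-integrable function has Bochner integral `0`, so the nonzero values force integrability.
  have hne : Δ⁻¹ ≠ 0 := inv_ne_zero hΔ.ne'
  have hleft : IntegrableOn (fun t => ((t - c) ^ 2)⁻¹) (Iic (c - Δ)) :=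
    Integrable.of_integral_ne_zero ((integral_Iic_inv_sq_sub hΔ).trans_ne hne)
  have hright : IntegrableOn (fun t => ((t - c) ^ 2)⁻¹) (Ioi (c + Δ)) :=
    Integrable.of_integral_ne_zero ((integral_Ioi_inv_sq_sub hΔ).trans_ne hne)
  exact hleft.union hright

lemma integral_inv_sq_sub_tails (hΔ : 0 < Δ) :
    ∫ t in Iic (c - Δ) ∪ Ioi (c + Δ), ((t - c) ^ 2)⁻¹ = 2 / Δ := by
  have hdisj : Disjoint (Iic (c - Δ)) (Ioi (c + Δ)) :=
    Iic_disjoint_Ioi (by linarith)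
  have hint := integrableOn_inv_sq_sub_tails (c := c) hΔ
  rw [setIntegral_union hdisj measurableSet_Ioi (hint.mono_set subset_union_left)
    (hint.mono_set subset_union_right), integral_Iic_inv_sq_sub hΔ, integral_Ioi_inv_sq_sub hΔ]
  ring

end TailIntegral

lemma abs_sub_le_norm_add_mul_I_sub (t s a b : ℝ) : |t - s| ≤ ‖(t + a * I) - (s + b * I)‖ := by
  simpa using abs_re_le_norm ((t + a * I) - (s + b * I))

lemma norm_one_add_mul_I_le (a : ℝ) : ‖1 + a * I‖ ≤ 1 + |a| := by
  simpa using norm_add_le (1 : ℂ) (a * I)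

lemma norm_kernel_le {t t₀ Δ a b c a' y : ℝ} (hΔ : 0 ≤ Δ) (ha' : |a'| ≤ 1 / 2) (hy : |y| ≤ 1)
    (ht : t ≠ t₀) :
    ‖I * Δ * (1 + a' * I) * y / (((t + a * I) - (t₀ + c * I)) * ((t + b * I) - (t₀ + c * I)))‖ ≤
      3 / 2 * Δ * ((t - t₀) ^ 2)⁻¹ := by
  have hnum : ‖I * Δ * (1 + a' * I) * y‖ ≤ 3 / 2 * Δ := by
    simp only [norm_mul, norm_I, norm_real, Real.norm_eq_abs, abs_of_nonneg hΔ, one_mul]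
    have := norm_one_add_mul_I_le a'
    calc Δ * ‖1 + a' * I‖ * |y| ≤ Δ * (3 / 2) * 1 := by gcongr; linarith
      _ = 3 / 2 * Δ := by ring
  have hden : (t - t₀) ^ 2 ≤ ‖((t + a * I) - (t₀ + c * I)) * ((t + b * I) - (t₀ + c * I))‖ := by
    rw [norm_mul, ← sq_abs, sq]
    exact mul_le_mul (abs_sub_le_norm_add_mul_I_sub _ _ _ _) (abs_sub_le_norm_add_mul_I_sub _ _ _ _)
      (abs_nonneg _) (norm_nonneg _)
  rw [norm_div, ← div_eq_mul_inv]
  exact div_le_div₀ (by positivity) hnum (by positivity [sub_ne_zero.2 ht]) hden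

theorem stmt_15_general (x X t₀ Δ : ℝ) (φ₁ φ₂ φ₁' : ℝ → ℝ) (f : ℝ → ℝ)
    (hΔ : 0 < Δ)
    (hf : ∀ t, |f t| ≤ 1) (hφ₁' : ∀ t, |φ₁' t| ≤ 1 / 2) :
    ‖∫ t in Set.Icc x X \ Set.Icc (t₀ - Δ) (t₀ + Δ),
        Complex.I * (Δ : ℂ) * (1 + (φ₁' t : ℂ) * Complex.I) * (f t : ℂ) /
          ((((t : ℂ) + (φ₁ t : ℂ) * Complex.I) - ((t₀ : ℂ) + (φ₁ t₀ : ℂ) * Complex.I)) *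
           (((t : ℂ) + (φ₂ t : ℂ) * Complex.I) - ((t₀ : ℂ) + (φ₁ t₀ : ℂ) * Complex.I)))‖
      ≤ 4 := by
  have htail : Icc x X \ Icc (t₀ - Δ) (t₀ + Δ) ⊆ Iic (t₀ - Δ) ∪ Ioi (t₀ + Δ) := by
    rintro t ⟨-, ht⟩
    rw [mem_Icc, not_and_or, not_le, not_le] at ht
    exact ht.imp le_of_lt id
  have hint : IntegrableOn (fun t => 3 / 2 * Δ * ((t - t₀) ^ 2)⁻¹) (Iic (t₀ - Δ) ∪ Ioi (t₀ + Δ)) :=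
    (integrableOn_inv_sq_sub_tails hΔ).const_mul _
  refine (norm_integral_le_of_norm_le (hint.mono_set htail) <|
    ae_restrict_of_forall_mem (measurableSet_Icc.diff measurableSet_Icc) fun t ht => ?_).trans ?_
  · refine norm_kernel_le hΔ.le (hφ₁' t) (hf t) ?_
    rintro rfl
    exact ht.2 ⟨by linarith, by linarith⟩
  calc ∫ t in Icc x X \ Icc (t₀ - Δ) (t₀ + Δ), 3 / 2 * Δ * ((t - t₀) ^ 2)⁻¹
      ≤ ∫ t in Iic (t₀ - Δ) ∪ Ioi (t₀ + Δ), 3 / 2 * Δ * ((t - t₀) ^ 2)⁻¹ :=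
        setIntegral_mono_set hint (ae_of_all _ fun t => by positivity) htail.eventuallyLE
    _ = 3 := by rw [integral_const_mul, integral_inv_sq_sub_tails hΔ]; field_simp
    _ ≤ 4 := by norm_num

/-- The tail integral `j₁` of the singular part of the kernel is bounded by `4`. -/
theorem stmt_15 (x X t₀ Δ : ℝ) (φ₁ φ₂ φ₁' : ℝ → ℝ) (f : ℝ → ℝ)
    (hΔ : 0 < Δ) (hΔdef : Δ = φ₂ t₀ - φ₁ t₀)
    (hf : ∀ t, |f t| ≤ 1) (hφ₁' : ∀ t, |φ₁' t| ≤ 1 / 2)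
    (hfm : Measurable f) (hm₁ : Measurable φ₁) (hm₂ : Measurable φ₂)
    (hm₁' : Measurable φ₁') :
    ‖∫ t in Set.Icc x X \ Set.Icc (t₀ - Δ) (t₀ + Δ),
        Complex.I * (Δ : ℂ) * (1 + (φ₁' t : ℂ) * Complex.I) * (f t : ℂ) /
          ((((t : ℂ) + (φ₁ t : ℂ) * Complex.I) - ((t₀ : ℂ) + (φ₁ t₀ : ℂ) * Complex.I)) *
           (((t : ℂ) + (φ₂ t : ℂ) * Complex.I) - ((t₀ : ℂ) + (φ₁ t₀ : ℂ) * Complex.I)))‖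
      ≤ 4 :=
  stmt_15_general x X t₀ Δ φ₁ φ₂ φ₁' f hΔ hf hφ₁'
end

section
/- Let φ₁, φ₂ ∈ C¹([0,b]) with φⱼ(0)=φⱼ'(0)=0, 0 < φ₁(t) < φ₂(t) for t ∈ (0,b], define S₁, S₂ as the graphs of φ₁, φ₂ over (0,b], and suppose liminf_{x→0} (φ₂(x)−φ₁(x))/φ₁(x) > 0. Then there exist μ > 0 and a Lipschitz function g ≥ 0 on ℝ such that, after restricting to a subinterval (0,b'], S₁ ⊂ {ξ+iη : 0 < η < g(ξ)} and S₂ ⊂ {ξ+iη : η > (1+μ)g(ξ)}; one may take g = (φ₁+φ₂)/2 extended by 0. -/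
/-!
The hypothesis on the liminf gives `c > 0` with `φ₂ - φ₁ > c φ₁` on some `(0, b']`. There
the midline `(φ₁ + φ₂) / 2` lies strictly above `φ₁`, and `(1 + μ)` times it lies below `φ₂`
once `μ = c / (2 + c)`. The midline is `C¹`, hence Lipschitz, on `[0, b]`; a McShane
extension truncated at `0` is a nonnegative Lipschitz function on `ℝ` that agrees with it on
`(0, b]`.
-/

open Set Filter Topology

theorem exists_forall_Ioc_of_eventually_nhdsGT {α : Type*} [TopologicalSpace α]
    [LinearOrder α] [OrderTopology α] [NoMaxOrder α] [DenselyOrdered α] {p : α → Prop}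
    {a b : α} (hab : a < b)
    (hp : ∀ᶠ x in 𝓝[>] a, p x) : ∃ b' ∈ Ioc a b, ∀ t ∈ Ioc a b', p t := by
  obtain ⟨u, hau, hu⟩ := mem_nhdsGT_iff_exists_Ioc_subset.mp hp
  exact ⟨min b u, ⟨lt_min hab hau, min_le_left _ _⟩,
    fun t ht => hu ⟨ht.1, ht.2.trans (min_le_right _ _)⟩⟩

theorem exists_pos_eventually_lt_of_pos_liminf {α : Type*} {l : Filter α} {f : α → ℝ}
    (hf : ∀ᶠ x in l, 0 ≤ f x) (h : 0 < liminf f l) : ∃ c > 0, ∀ᶠ x in l, c < f x :=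
  ⟨liminf f l / 2, half_pos h,
    eventually_lt_of_lt_liminf (half_lt_self h) (isBoundedUnder_of_eventually_ge hf)⟩

theorem LipschitzOnWith.exists_lipschitzWith_nonneg_eqOn {α : Type*} [PseudoMetricSpace α]
    {f : α → ℝ} {s : Set α} {K : NNReal} (hf : LipschitzOnWith K f s)
    (hs : ∀ x ∈ s, 0 ≤ f x) :
    ∃ g : α → ℝ, LipschitzWith K g ∧ (∀ x, 0 ≤ g x) ∧ EqOn f g s := by
  obtain ⟨g, hg, hfg⟩ := hf.extend_real
  refine ⟨fun x => max (g x) 0, hg.max_const 0, fun x => le_max_right _ _, fun x hx => ?_⟩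
  simp only [← hfg hx, max_eq_left (hs x hx)]

theorem lt_avg_and_mul_avg_lt {c x y : ℝ} (hc : 0 < c) (hx : 0 < x) (hxy : c < (y - x) / x) :
    x < (x + y) / 2 ∧ (1 + c / (2 + c)) * ((x + y) / 2) < y := by
  rw [lt_div_iff₀ hx] at hxy
  have h2c : 0 < 2 + c := by linarith
  refine ⟨by nlinarith, ?_⟩
  calc (1 + c / (2 + c)) * ((x + y) / 2) = (1 + c) * (x + y) / (2 + c) := by field_simp; ring
    _ < y := by rw [div_lt_iff₀ h2c]; nlinarith

theorem stmt_17_general (b : ℝ) (hb : 0 < b) (φ₁ φ₂ : ℝ → ℝ)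
    (h₁ : ContDiffOn ℝ 1 φ₁ (Set.Icc 0 b)) (h₂ : ContDiffOn ℝ 1 φ₂ (Set.Icc 0 b))
    (hpos : ∀ t ∈ Set.Ioc 0 b, 0 < φ₁ t ∧ φ₁ t < φ₂ t)
    (hliminf : 0 < Filter.liminf (fun x => (φ₂ x - φ₁ x) / φ₁ x)
      (nhdsWithin 0 (Set.Ioi 0))) :
    ∃ μ > 0, ∃ b' ∈ Set.Ioc 0 b, ∃ g : ℝ → ℝ,
      (∃ L : NNReal, LipschitzWith L g) ∧ (∀ ξ, 0 ≤ g ξ) ∧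
      ∀ t ∈ Set.Ioc 0 b', φ₁ t < g t ∧ (1 + μ) * g t < φ₂ t := by
  have hratio_nonneg : ∀ᶠ x in 𝓝[>] (0 : ℝ), 0 ≤ (φ₂ x - φ₁ x) / φ₁ x := by
    filter_upwards [Ioc_mem_nhdsGT hb] with x hx
    exact div_nonneg (sub_nonneg.mpr (hpos x hx).2.le) (hpos x hx).1.le
  obtain ⟨c, hc, hratio⟩ := exists_pos_eventually_lt_of_pos_liminf hratio_nonneg hliminf
  obtain ⟨b', ⟨hb'0, hb'b⟩, hsep⟩ := exists_forall_Ioc_of_eventually_nhdsGT hb hratio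
  obtain ⟨L, hL⟩ := ((h₁.add h₂).div_const 2).exists_lipschitzOnWith one_ne_zero
    (convex_Icc 0 b) isCompact_Icc
  obtain ⟨g, hg, hg_nonneg, hg_eq⟩ :=
    (hL.mono Ioc_subset_Icc_self).exists_lipschitzWith_nonneg_eqOn
      fun t ht => by have := hpos t ht; linarith
  refine ⟨c / (2 + c), by positivity, b', ⟨hb'0, hb'b⟩, g, ⟨L, hg⟩, hg_nonneg,
    fun t ht => ?_⟩
  have htb : t ∈ Ioc 0 b := ⟨ht.1, ht.2.trans hb'b⟩
  rw [← hg_eq htb]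
  exact lt_avg_and_mul_avg_lt hc (hpos t htb).1 (hsep t ht)

/-- If two tangent graphs satisfy `liminf_{x→0} (φ₂−φ₁)/φ₁ > 0`, then after
shrinking the interval they are separated by the corridor between `g` and
`(1+μ)g` for a Lipschitz `g ≥ 0` and some `μ > 0`. -/
theorem stmt_17 (b : ℝ) (hb : 0 < b) (φ₁ φ₂ : ℝ → ℝ)
    (h₁ : ContDiffOn ℝ 1 φ₁ (Set.Icc 0 b)) (h₂ : ContDiffOn ℝ 1 φ₂ (Set.Icc 0 b))
    (h10 : φ₁ 0 = 0) (h20 : φ₂ 0 = 0)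
    (h1d : derivWithin φ₁ (Set.Icc 0 b) 0 = 0)
    (h2d : derivWithin φ₂ (Set.Icc 0 b) 0 = 0)
    (hpos : ∀ t ∈ Set.Ioc 0 b, 0 < φ₁ t ∧ φ₁ t < φ₂ t)
    (hliminf : 0 < Filter.liminf (fun x => (φ₂ x - φ₁ x) / φ₁ x)
      (nhdsWithin 0 (Set.Ioi 0))) :
    ∃ μ > 0, ∃ b' ∈ Set.Ioc 0 b, ∃ g : ℝ → ℝ,
      (∃ L : NNReal, LipschitzWith L g) ∧ (∀ ξ, 0 ≤ g ξ) ∧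
      ∀ t ∈ Set.Ioc 0 b', φ₁ t < g t ∧ (1 + μ) * g t < φ₂ t :=
  stmt_17_general b hb φ₁ φ₂ h₁ h₂ hpos hliminf
end
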